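/- For every integer k ≥ 2, the graph H_k with vertex set {z,w} ∪ {x_i, y_i : i ∈ [k]}, where for each i the vertices x_i y_i z w x_i form a 4-cycle (edges x_i y_i, y_i z, z w, w x_i), satisfies μ(H_k) = μ_o(H_k) = μ_d(H_k) = μ_t(H_k) = 2k. -/

import Mathlib

open SimpleGraph

/-- `u` and `v` are `X`-visible in `G`: there is a shortest `u,v`-walk whose
vertices meet `X` only possibly in `u` and `v`. -/
def IsMVisible {V : Type*} (G : SimpleGraph V) (X : Set V) (u v : V) : Prop :=
  ∃ P : G.Walk u v, P.length = G.dist u v ∧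
    ∀ w ∈ P.support, w ∈ X → w = u ∨ w = v

/-- mutual-visibility set -/
def IsMVSet {V : Type*} (G : SimpleGraph V) (X : Set V) : Prop :=
  ∀ u ∈ X, ∀ v ∈ X, IsMVisible G X u v

/-- outer mutual-visibility set -/
def IsOuterMVSet {V : Type*} (G : SimpleGraph V) (X : Set V) : Prop :=
  ∀ u ∈ X, ∀ v : V, IsMVisible G X u v

/-- dual mutual-visibility set -/
def IsDualMVSet {V : Type*} (G : SimpleGraph V) (X : Set V) : Prop :=
  (∀ u ∈ X, ∀ v ∈ X, IsMVisible G X u v) ∧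
  (∀ u ∉ X, ∀ v ∉ X, IsMVisible G X u v)

/-- total mutual-visibility set -/
def IsTotalMVSet {V : Type*} (G : SimpleGraph V) (X : Set V) : Prop :=
  ∀ u v : V, IsMVisible G X u v

/-- the mutual-visibility number μ(G) -/
noncomputable def mu {V : Type*} (G : SimpleGraph V) : ℕ :=
  sSup {n | ∃ X : Set V, IsMVSet G X ∧ X.ncard = n}

/-- the outer mutual-visibility number μₒ(G) -/
noncomputable def muO {V : Type*} (G : SimpleGraph V) : ℕ :=
  sSup {n | ∃ X : Set V, IsOuterMVSet G X ∧ X.ncard = n}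

/-- the dual mutual-visibility number μ_d(G) -/
noncomputable def muD {V : Type*} (G : SimpleGraph V) : ℕ :=
  sSup {n | ∃ X : Set V, IsDualMVSet G X ∧ X.ncard = n}

/-- the total mutual-visibility number μ_t(G) -/
noncomputable def muT {V : Type*} (G : SimpleGraph V) : ℕ :=
  sSup {n | ∃ X : Set V, IsTotalMVSet G X ∧ X.ncard = n}

/-- relation underlying the graph `H_k`; with `z = Sum.inl true`, `w = Sum.inl false`,
`x i = Sum.inr (i, false)`, `y i = Sum.inr (i, true)`, the edges are exactly
`z w`, `w x_i`, `x_i y_i`, `y_i z`, i.e. each `x_i y_i z w x_i` is a 4-cycle. -/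
def Hrel (k : ℕ) : (Bool ⊕ Fin k × Bool) → (Bool ⊕ Fin k × Bool) → Prop
  | Sum.inl a, Sum.inl b => a ≠ b
  | Sum.inl a, Sum.inr p => a = p.2
  | Sum.inr p, Sum.inl a => a = p.2
  | Sum.inr p, Sum.inr q => p.1 = q.1 ∧ p.2 ≠ q.2

/-- the graph `H_k` from the paper -/
def Hgraph (k : ℕ) : SimpleGraph (Bool ⊕ Fin k × Bool) := SimpleGraph.fromRel (Hrel k)

/-! The vertices `x_i, y_i` form a total mutual-visibility set: between any two vertices there is
a shortest path whose inner vertices lie in the edge `zw`. Conversely, for `i ≠ j` the vertices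
`x_i` and `y_j` are at distance `3`, so a mutual-visibility set containing both misses at least two
vertices; and when `k ≥ 2`, any set missing at most one vertex contains such a pair `x_i, y_j`. -/

namespace IsMVisible

variable {V : Type*} {G : SimpleGraph V} {X : Set V} {u v a b : V}

lemma symm (h : IsMVisible G X u v) : IsMVisible G X v u := by
  obtain ⟨P, hlen, hX⟩ := h
  exact ⟨P.reverse, by rw [Walk.length_reverse, hlen, dist_comm],
    fun w hw hwX => (hX w (by simpa using hw) hwX).symm⟩

lemma of_walk (P : G.Walk u v) (hP : P.length ≤ G.dist u v)
    (hX : ∀ w ∈ P.support, w ∈ X → w = u ∨ w = v) : IsMVisible G X u v :=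
  ⟨P, le_antisymm hP (dist_le P), hX⟩

lemma refl (u : V) : IsMVisible G X u u :=
  of_walk Walk.nil (by simp) (by simp)

lemma of_adj (h : G.Adj u v) : IsMVisible G X u v :=
  of_walk h.toWalk (by simp [dist_eq_one_iff_adj.2 h]) (by simp)

lemma of_adj_adj (hne : u ≠ v) (hnadj : ¬G.Adj u v) (hua : G.Adj u a) (hav : G.Adj a v)
    (ha : a ∉ X) : IsMVisible G X u v := by
  let P := Walk.cons hua hav.toWalk
  refine of_walk P (P.reachable.one_lt_dist_of_ne_of_not_adj hne hnadj) ?_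
  simp only [P, Adj.toWalk, Walk.support_cons, Walk.support_nil, List.mem_cons,
    List.not_mem_nil, or_false]
  grind

lemma of_adj_adj_adj (hd : 2 < G.dist u v) (hua : G.Adj u a) (hab : G.Adj a b)
    (hbv : G.Adj b v) (ha : a ∉ X) (hb : b ∉ X) : IsMVisible G X u v := by
  refine of_walk (Walk.cons hua (Walk.cons hab hbv.toWalk)) hd ?_
  simp only [Adj.toWalk, Walk.support_cons, Walk.support_nil, List.mem_cons,
    List.not_mem_nil, or_false]
  grind

/-- The inner vertices of a shortest path avoiding `X` are distinct vertices outside `X`. -/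
lemma dist_sub_one_le_ncard_compl [Finite V] (h : IsMVisible G X u v) :
    G.dist u v - 1 ≤ Xᶜ.ncard := by
  obtain ⟨P, hlen, hX⟩ := h
  have hP := P.isPath_of_length_eq_dist hlen
  have hinner : P.getVert '' Set.Ioo 0 P.length ⊆ Xᶜ := by
    rintro _ ⟨i, ⟨hi0, hilen⟩, rfl⟩ hiX
    rcases hX _ (P.getVert_mem_support i) hiX with h | h
    · exact hi0.ne' ((hP.getVert_eq_start_iff hilen.le).1 h)
    · exact hilen.ne ((hP.getVert_eq_end_iff hilen.le).1 h)
  calc G.dist u v - 1 = (Set.Ioo 0 P.length).ncard := by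
        rw [← Finset.coe_Ioo, Set.ncard_coe_finset, Nat.card_Ioo, hlen, Nat.sub_zero]
    _ = (P.getVert '' Set.Ioo 0 P.length).ncard :=
        ((hP.getVert_injOn.mono fun _ hi => hi.2.le).ncard_image).symm
    _ ≤ Xᶜ.ncard := Set.ncard_le_ncard hinner

end IsMVisible

lemma SimpleGraph.Reachable.two_lt_dist {V : Type*} {G : SimpleGraph V} {u v : V}
    (hr : G.Reachable u v) (hne : u ≠ v) (hnadj : ¬G.Adj u v)
    (hc : G.commonNeighbors u v = ∅) : 2 < G.dist u v := by
  have := two_lt_edist_iff.2 ⟨hne, hnadj, hc⟩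
  rw [← hr.coe_dist_eq_edist] at this
  exact_mod_cast this

section VisibilityNumbers

variable {V : Type*} {G : SimpleGraph V} {X : Set V}

lemma IsTotalMVSet.isOuterMVSet (h : IsTotalMVSet G X) : IsOuterMVSet G X :=
  fun u _ v => h u v

lemma IsTotalMVSet.isDualMVSet (h : IsTotalMVSet G X) : IsDualMVSet G X :=
  ⟨fun u _ v _ => h u v, fun u _ v _ => h u v⟩

lemma IsOuterMVSet.isMVSet (h : IsOuterMVSet G X) : IsMVSet G X :=
  fun u hu v _ => h u hu v

lemma IsDualMVSet.isMVSet (h : IsDualMVSet G X) : IsMVSet G X :=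
  h.1

lemma visibilityNumbers_eq_of_isTotalMVSet {n : ℕ} (hX : IsTotalMVSet G X) (hn : X.ncard = n)
    (hmax : ∀ Y : Set V, IsMVSet G Y → Y.ncard ≤ n) :
    mu G = n ∧ muO G = n ∧ muD G = n ∧ muT G = n := by
  refine ⟨IsGreatest.csSup_eq ⟨⟨X, ?_, hn⟩, ?_⟩, IsGreatest.csSup_eq ⟨⟨X, ?_, hn⟩, ?_⟩,
    IsGreatest.csSup_eq ⟨⟨X, ?_, hn⟩, ?_⟩, IsGreatest.csSup_eq ⟨⟨X, hX, hn⟩, ?_⟩⟩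
  · exact hX.isOuterMVSet.isMVSet
  · rintro _ ⟨Y, hY, rfl⟩; exact hmax Y hY
  · exact hX.isOuterMVSet
  · rintro _ ⟨Y, hY, rfl⟩; exact hmax Y hY.isMVSet
  · exact hX.isDualMVSet
  · rintro _ ⟨Y, hY, rfl⟩; exact hmax Y hY.isMVSet
  · rintro _ ⟨Y, hY, rfl⟩; exact hmax Y hY.isOuterMVSet.isMVSet

end VisibilityNumbers

namespace Hgraph

open Sum

variable {k : ℕ}

@[simp] lemma adj_inl_inl {a b : Bool} : (Hgraph k).Adj (inl a) (inl b) ↔ a ≠ b := by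
  simp [Hgraph, Hrel, ne_comm]

@[simp] lemma adj_inl_inr {a : Bool} {p : Fin k × Bool} :
    (Hgraph k).Adj (inl a) (inr p) ↔ a = p.2 := by
  simp [Hgraph, Hrel]

@[simp] lemma adj_inr_inl {a : Bool} {p : Fin k × Bool} :
    (Hgraph k).Adj (inr p) (inl a) ↔ a = p.2 := by
  simp [Hgraph, Hrel]

@[simp] lemma adj_inr_inr {p q : Fin k × Bool} :
    (Hgraph k).Adj (inr p) (inr q) ↔ p.1 = q.1 ∧ p.2 ≠ q.2 := by
  simp only [Hgraph, Hrel, fromRel_adj, ne_eq, inr.injEq]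
  grind

lemma two_lt_dist_inr_inr {p q : Fin k × Bool} (h1 : p.1 ≠ q.1) (h2 : p.2 ≠ q.2) :
    2 < (Hgraph k).dist (inr p) (inr q) := by
  have hr : (Hgraph k).Reachable (inr p) (inr q) :=
    ((adj_inr_inl.2 rfl).reachable.trans (adj_inl_inl.2 h2).reachable).trans
      (adj_inl_inr.2 rfl).reachable
  refine hr.two_lt_dist (by simp [Prod.ext_iff, h1]) (by simp [h1]) ?_
  refine Set.eq_empty_of_forall_notMem fun m hm => ?_
  rw [mem_commonNeighbors] at hm
  rcases m with a | r
  · simp only [adj_inr_inl] at hm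
    exact h2 (hm.1.symm.trans hm.2)
  · simp only [adj_inr_inr] at hm
    exact h1 (hm.1.1.trans hm.2.1.symm)

lemma isTotalMVSet_range_inr : IsTotalMVSet (Hgraph k) (Set.range inr) := by
  have inl_notMem (a : Bool) : (inl a : Bool ⊕ Fin k × Bool) ∉ Set.range inr := by simp
  have inl_vis (a : Bool) (v) : IsMVisible (Hgraph k) (Set.range inr) (inl a) v := by
    rcases v with b | p
    · obtain rfl | hab := eq_or_ne a b
      exacts [.refl _, .of_adj (adj_inl_inl.2 hab)]
    · obtain hap | hap := eq_or_ne a p.2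
      · exact .of_adj (adj_inl_inr.2 hap)
      · exact .of_adj_adj (by simp) (by simpa) (adj_inl_inl.2 hap) (adj_inl_inr.2 rfl)
          (inl_notMem _)
  rintro (a | p) v
  · exact inl_vis a v
  rcases v with b | q
  · exact (inl_vis b _).symm
  obtain rfl | hpq := eq_or_ne p q
  · exact .refl _
  by_cases h1 : p.1 = q.1
  · exact .of_adj (adj_inr_inr.2 ⟨h1, fun h2 => hpq (Prod.ext h1 h2)⟩)
  obtain h2 | h2 := eq_or_ne p.2 q.2
  · exact .of_adj_adj (by simpa using hpq) (by simp [h1]) (adj_inr_inl.2 rfl)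
      (adj_inl_inr.2 h2) (inl_notMem _)
  · exact .of_adj_adj_adj (two_lt_dist_inr_inr h1 h2) (adj_inr_inl.2 rfl) (adj_inl_inl.2 h2)
      (adj_inl_inr.2 rfl) (inl_notMem _) (inl_notMem _)

lemma ncard_range_inr :
    (Set.range (inr : Fin k × Bool → Bool ⊕ Fin k × Bool)).ncard = 2 * k := by
  rw [← Set.image_univ, Set.ncard_image_of_injective _ inr_injective, Set.ncard_univ]
  simp [Nat.card_eq_fintype_card, mul_comm]

lemma ncard_le_of_isMVSet (hk : 2 ≤ k) {X : Set (Bool ⊕ Fin k × Bool)}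
    (hX : IsMVSet (Hgraph k) X) : X.ncard ≤ 2 * k := by
  suffices h : 2 ≤ Xᶜ.ncard by
    have := X.ncard_add_ncard_compl
    simp only [Nat.card_eq_fintype_card, Fintype.card_sum, Fintype.card_prod, Fintype.card_bool,
      Fintype.card_fin] at this
    omega
  by_contra! hlt
  obtain ⟨c, hcompl⟩ := (Set.ncard_le_one_iff_subset_singleton).1 (Nat.le_of_lt_succ hlt)
  have mem (d) (hd : d ≠ c) : d ∈ X := by_contra fun h => hd (hcompl h)
  have far (i j : Fin k) (hij : i ≠ j) (hi : inr (i, false) ≠ c) (hj : inr (j, true) ≠ c) :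
      False := by
    have := (hX _ (mem _ hi) _ (mem _ hj)).dist_sub_one_le_ncard_compl
    have := two_lt_dist_inr_inr (p := (i, false)) (q := (j, true)) hij (by simp)
    omega
  obtain ⟨i, j, hij⟩ : ∃ i j : Fin k, i ≠ j := ⟨⟨0, by omega⟩, ⟨1, by omega⟩, by simp⟩
  by_cases hc : inr (i, false) = c ∨ inr (j, true) = c
  · exact far j i hij.symm (by rcases hc with rfl | rfl <;> simp [hij.symm])
      (by rcases hc with rfl | rfl <;> simp [hij])
  · rw [not_or] at hc
    exact far i j hij hc.1 hc.2

end Hgraph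

theorem stmt_11 (k : ℕ) (hk : 2 ≤ k) :
    mu (Hgraph k) = 2 * k ∧ muO (Hgraph k) = 2 * k ∧
      muD (Hgraph k) = 2 * k ∧ muT (Hgraph k) = 2 * k :=
  visibilityNumbers_eq_of_isTotalMVSet Hgraph.isTotalMVSet_range_inr Hgraph.ncard_range_inr
    fun _ hX => Hgraph.ncard_le_of_isMVSet hk hX
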